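/- The sequence B_0 = 1, B_{k+1} = 1 - (3h/4)/B_k converges to (1 + sqrt(1-3h))/2 for every real h with 0 ≤ h < 1/3. -/
import Mathlib


theorem cf_convergents_tendsto (h : ℝ) (h0 : 0 ≤ h) (h1 : h < 1/3)
    (B : ℕ → ℝ) (hB0 : B 0 = 1) (hBrec : ∀ k, B (k+1) = 1 - (3*h/4) / B k) :
    Filter.Tendsto B Filter.atTop (nhds ((1 + Real.sqrt (1 - 3*h)) / 2)) := by
  set s := Real.sqrt (1 - 3*h) with hs
  have hs2 : s^2 = 1 - 3*h := Real.sq_sqrt (by linarith)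
  have hspos : 0 < s := Real.sqrt_pos.mpr (by linarith)
  have hsle : s ≤ 1 := by nlinarith
  set L : ℝ := (1 + s) / 2 with hL
  have hLhalf : 1/2 < L := by rw [hL]; linarith
  have hLpos : 0 < L := by linarith
  have hLle : L ≤ 1 := by rw [hL]; linarith
  have hc : 3*h/4 = L * (1 - L) := by rw [hL]; nlinarith
  set r : ℝ := (1 - L) / L with hr
  have hr0 : 0 ≤ r := div_nonneg (by linarith) hLpos.le
  have hr1 : r < 1 := by rw [hr, div_lt_one hLpos]; linarith
  -- main induction
  have key : ∀ k, L ≤ B k ∧ B k - L ≤ r ^ k * (1 - L) := by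
    intro k
    induction k with
    | zero => constructor <;> simp [hB0] <;> linarith
    | succ k ih =>
      obtain ⟨ih1, ih2⟩ := ih
      have hBpos : 0 < B k := lt_of_lt_of_le hLpos ih1
      have hform : B (k+1) - L = (1 - L) * (B k - L) / B k := by
        rw [hBrec k, hc]
        field_simp
        ring
      constructor
      · have hnum : 0 ≤ (1 - L) * (B k - L) / B k :=
          div_nonneg (mul_nonneg (by linarith) (by linarith)) hBpos.le
        linarith [hform ▸ hnum]
      · have step : B (k+1) - L ≤ r * (B k - L) := by
          rw [hform, hr, div_mul_eq_mul_div, div_le_div_iff₀ hBpos hLpos]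
          nlinarith [mul_nonneg (mul_nonneg (by linarith : (0:ℝ) ≤ 1 - L) (by linarith : (0:ℝ) ≤ B k - L)) (by linarith : (0:ℝ) ≤ B k - L)]
        calc B (k+1) - L ≤ r * (B k - L) := step
          _ ≤ r * (r ^ k * (1 - L)) := by
              apply mul_le_mul_of_nonneg_left ih2 hr0
          _ = r ^ (k+1) * (1 - L) := by ring
  have hdiff : Filter.Tendsto (fun k => B k - L) Filter.atTop (nhds 0) := by
    apply squeeze_zero (fun k => by linarith [(key k).1]) (fun k => (key k).2)
    have := (tendsto_pow_atTop_nhds_zero_of_lt_one hr0 hr1).mul_const (1 - L)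
    simpa using this
  have : Filter.Tendsto (fun k => (B k - L) + L) Filter.atTop (nhds (0 + L)) :=
    hdiff.add_const L
  simpa using this
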